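/- For h = 1,…,H let g_h : ℝ → ℝ be differentiable on a neighborhood of z and twice differentiable at z, with |g_h(z)| ≤ X, |g_h'(z)| ≤ Y, and |g_h''(z)| ≤ Z, let d_1,…,d_D ∈ ℝ with |d_k| ≤ R, let mixing coefficients α_{hk} ∈ ℝ satisfy |α_{hk}| ≤ α, let weights W_1,…,W_H ∈ ℝ satisfy |W_h| ≤ W, let b ∈ ℝ, and let γ ≥ 0, with X, Y, Z, R, α, W ≥ 0. Define G(t) = Σ_{h=1}^H W_h · ( Σ_{k=1}^D α_{hk} · exp(−γ (g_h(t) − d_k)²) ) + b. Then G is twice differentiable at z and |G''(z)| ≤ 2·H·W·D·α·γ·[ (1 + 2γ(X + R)²)·Y² + (X + R)·Z ]. -/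

import Mathlib

/-!
By the chain and product rules, `G'' = Σ_h W_h (a_h''(g_h) g_h'² + a_h'(g_h) g_h'')` at `z`, where
`a_h` is the KAF of neuron `h`. Each Gaussian kernel `e = exp(-γ u²)`, `u = s - d_k`, satisfies
`0 < e ≤ 1`, so its derivatives `-2γu·e` and `(4γ²u² - 2γ)·e` are bounded by `2γ(X + R)`
and `2γ(1 + 2γ(X + R)²)` once `|s| ≤ X`; summing over `k` and `h` gives the factors `Dα`
and `HW`.
-/

open Filter Topology

theorem abs_sum_mul_le_card_mul {ι : Type*} [Fintype ι] {c f : ι → ℝ} {C M : ℝ}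
    (hc : ∀ i, |c i| ≤ C) (hf : ∀ i, |f i| ≤ M) :
    |∑ i, c i * f i| ≤ Fintype.card ι * (C * M) :=
  calc |∑ i, c i * f i| ≤ ∑ i, |c i * f i| := Finset.abs_sum_le_sum_abs _ _
    _ ≤ ∑ _i : ι, C * M := Finset.sum_le_sum fun i _ => by
        rw [abs_mul]
        exact mul_le_mul (hc i) (hf i) (abs_nonneg _) ((abs_nonneg _).trans (hc i))
    _ = Fintype.card ι * (C * M) := by simp

theorem abs_mul_mul_add_mul_le {p q v w P Q Y Z : ℝ} (hp : |p| ≤ P) (hq : |q| ≤ Q)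
    (hv : |v| ≤ Y) (hw : |w| ≤ Z) :
    |p * v * v + q * w| ≤ P * Y ^ 2 + Q * Z := by
  have hP : 0 ≤ P := (abs_nonneg p).trans hp
  have hQ : 0 ≤ Q := (abs_nonneg q).trans hq
  have hY : 0 ≤ Y := (abs_nonneg v).trans hv
  calc |p * v * v + q * w| ≤ |p| * |v| * |v| + |q| * |w| := by
        simpa only [abs_mul] using abs_add_le (p * v * v) (q * w)
    _ ≤ P * Y * Y + Q * Z := by gcongr
    _ = P * Y ^ 2 + Q * Z := by ring

noncomputable def gaussKernel (γ c s : ℝ) : ℝ := Real.exp (-γ * (s - c) ^ 2)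

noncomputable def gaussKernelDeriv (γ c s : ℝ) : ℝ := -2 * γ * (s - c) * gaussKernel γ c s

noncomputable def gaussKernelDeriv2 (γ c s : ℝ) : ℝ :=
  (4 * γ ^ 2 * (s - c) ^ 2 - 2 * γ) * gaussKernel γ c s

section GaussKernel

variable {γ c s : ℝ}

theorem hasDerivAt_gaussKernel : HasDerivAt (gaussKernel γ c) (gaussKernelDeriv γ c s) s :=
  ((((hasDerivAt_id' s).sub_const c).fun_pow 2).const_mul (-γ)).exp.congr_deriv
    (by rw [gaussKernelDeriv, gaussKernel]; ring)

theorem hasDerivAt_gaussKernelDeriv :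
    HasDerivAt (gaussKernelDeriv γ c) (gaussKernelDeriv2 γ c s) s :=
  ((((hasDerivAt_id' s).sub_const c).const_mul (-2 * γ)).fun_mul
    (hasDerivAt_gaussKernel (γ := γ) (c := c))).congr_deriv
    (by rw [gaussKernelDeriv2, gaussKernelDeriv, gaussKernel]; ring)

theorem abs_mul_gaussKernel_le (hγ : 0 ≤ γ) (p : ℝ) : |p * gaussKernel γ c s| ≤ |p| := by
  have hle : gaussKernel γ c s ≤ 1 :=
    Real.exp_le_one_iff.2 (by rw [neg_mul]; exact neg_nonpos.2 (by positivity))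
  rw [abs_mul, abs_of_pos (show 0 < gaussKernel γ c s from Real.exp_pos _)]
  exact mul_le_of_le_one_right (abs_nonneg p) hle

theorem abs_gaussKernelDeriv_le {ρ : ℝ} (hγ : 0 ≤ γ) (hs : |s - c| ≤ ρ) :
    |gaussKernelDeriv γ c s| ≤ 2 * γ * ρ :=
  calc |gaussKernelDeriv γ c s| ≤ |-2 * γ * (s - c)| := abs_mul_gaussKernel_le hγ _
    _ = 2 * γ * |s - c| := by rw [abs_mul, abs_mul, abs_neg, abs_two, abs_of_nonneg hγ]
    _ ≤ 2 * γ * ρ := by gcongr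

theorem abs_gaussKernelDeriv2_le {ρ : ℝ} (hγ : 0 ≤ γ) (hs : |s - c| ≤ ρ) :
    |gaussKernelDeriv2 γ c s| ≤ 2 * γ * (1 + 2 * γ * ρ ^ 2) := by
  have hsq : (s - c) ^ 2 ≤ ρ ^ 2 := by
    rw [← sq_abs]
    exact pow_le_pow_left₀ (abs_nonneg _) hs 2
  calc |gaussKernelDeriv2 γ c s| ≤ |4 * γ ^ 2 * (s - c) ^ 2 - 2 * γ| :=
        abs_mul_gaussKernel_le hγ _
    _ ≤ |4 * γ ^ 2 * (s - c) ^ 2| + |2 * γ| := abs_sub _ _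
    _ = 4 * γ ^ 2 * (s - c) ^ 2 + 2 * γ := by
        rw [abs_of_nonneg (by positivity), abs_of_nonneg (by positivity)]
    _ ≤ 2 * γ * (1 + 2 * γ * ρ ^ 2) := by nlinarith

end GaussKernel

section Kaf

variable {ι : Type*} [Fintype ι]

noncomputable def kaf (γ : ℝ) (d α : ι → ℝ) (s : ℝ) : ℝ :=
  ∑ k, α k * gaussKernel γ (d k) s

noncomputable def kafDeriv (γ : ℝ) (d α : ι → ℝ) (s : ℝ) : ℝ :=
  ∑ k, α k * gaussKernelDeriv γ (d k) s

noncomputable def kafDeriv2 (γ : ℝ) (d α : ι → ℝ) (s : ℝ) : ℝ :=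
  ∑ k, α k * gaussKernelDeriv2 γ (d k) s

variable {γ : ℝ} {d α : ι → ℝ} {s : ℝ}

theorem hasDerivAt_kaf : HasDerivAt (kaf γ d α) (kafDeriv γ d α s) s :=
  HasDerivAt.fun_sum fun k _ => hasDerivAt_gaussKernel.const_mul (α k)

theorem hasDerivAt_kafDeriv : HasDerivAt (kafDeriv γ d α) (kafDeriv2 γ d α s) s :=
  HasDerivAt.fun_sum fun k _ => hasDerivAt_gaussKernelDeriv.const_mul (α k)

variable {A R X : ℝ}

omit [Fintype ι] in
theorem abs_sub_dictionary_le (hd : ∀ k, |d k| ≤ R) (hs : |s| ≤ X) (k : ι) :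
    |s - d k| ≤ X + R :=
  (abs_sub _ _).trans (add_le_add hs (hd k))

theorem abs_kafDeriv_le (hγ : 0 ≤ γ) (hd : ∀ k, |d k| ≤ R) (hα : ∀ k, |α k| ≤ A)
    (hs : |s| ≤ X) :
    |kafDeriv γ d α s| ≤ Fintype.card ι * (A * (2 * γ * (X + R))) :=
  abs_sum_mul_le_card_mul hα fun k => abs_gaussKernelDeriv_le hγ (abs_sub_dictionary_le hd hs k)

theorem abs_kafDeriv2_le (hγ : 0 ≤ γ) (hd : ∀ k, |d k| ≤ R) (hα : ∀ k, |α k| ≤ A)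
    (hs : |s| ≤ X) :
    |kafDeriv2 γ d α s| ≤ Fintype.card ι * (A * (2 * γ * (1 + 2 * γ * (X + R) ^ 2))) :=
  abs_sum_mul_le_card_mul hα fun k => abs_gaussKernelDeriv2_le hγ (abs_sub_dictionary_le hd hs k)

end Kaf

theorem kafnet_preactivation_second_deriv_bound_general (H D : ℕ)
    (g : Fin H → ℝ → ℝ) (z γ X Y Z R α W b : ℝ)
    (d : Fin D → ℝ) (αc : Fin H → Fin D → ℝ) (Wv : Fin H → ℝ)
    (hγ : 0 ≤ γ)
    (hg : ∀ h, ∀ᶠ t in nhds z, DifferentiableAt ℝ (g h) t)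
    (hg2 : ∀ h, DifferentiableAt ℝ (deriv (g h)) z)
    (hgz : ∀ h, |g h z| ≤ X) (hg' : ∀ h, |deriv (g h) z| ≤ Y)
    (hg'' : ∀ h, |deriv (deriv (g h)) z| ≤ Z)
    (hd : ∀ k, |d k| ≤ R) (hαc : ∀ h k, |αc h k| ≤ α) (hWv : ∀ h, |Wv h| ≤ W) :
    (∀ᶠ t in nhds z, DifferentiableAt ℝ
        (fun t => (∑ h : Fin H, Wv h *
          ∑ k : Fin D, αc h k * Real.exp (-γ * (g h t - d k) ^ 2)) + b) t) ∧
      DifferentiableAt ℝ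
        (deriv (fun t => (∑ h : Fin H, Wv h *
          ∑ k : Fin D, αc h k * Real.exp (-γ * (g h t - d k) ^ 2)) + b)) z ∧
      |deriv (deriv (fun t => (∑ h : Fin H, Wv h *
          ∑ k : Fin D, αc h k * Real.exp (-γ * (g h t - d k) ^ 2)) + b)) z| ≤
        2 * H * W * D * α * γ * ((1 + 2 * γ * (X + R) ^ 2) * Y ^ 2 + (X + R) * Z) := by
  change (∀ᶠ t in 𝓝 z,
      DifferentiableAt ℝ (fun t => ∑ h, Wv h * kaf γ d (αc h) (g h t) + b) t) ∧
    DifferentiableAt ℝ (deriv fun t => ∑ h, Wv h * kaf γ d (αc h) (g h t) + b) z ∧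
    |deriv (deriv fun t => ∑ h, Wv h * kaf γ d (αc h) (g h t) + b) z| ≤ _
  have hfirst : ∀ᶠ t in 𝓝 z, HasDerivAt (fun t => ∑ h, Wv h * kaf γ d (αc h) (g h t) + b)
      (∑ h, Wv h * (kafDeriv γ d (αc h) (g h t) * deriv (g h) t)) t :=
    (eventually_all.2 hg).mono fun t hgt => (HasDerivAt.fun_sum fun h _ =>
      (hasDerivAt_kaf.comp t (hgt h).hasDerivAt).const_mul (Wv h)).add_const b
  have hsecond : HasDerivAt (fun t => ∑ h, Wv h * (kafDeriv γ d (αc h) (g h t) * deriv (g h) t))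
      (∑ h, Wv h * (kafDeriv2 γ d (αc h) (g h z) * deriv (g h) z * deriv (g h) z +
        kafDeriv γ d (αc h) (g h z) * deriv (deriv (g h)) z)) z :=
    HasDerivAt.fun_sum fun h _ => ((hasDerivAt_kafDeriv.comp z
      (hg h).self_of_nhds.hasDerivAt).mul (hg2 h).hasDerivAt).const_mul (Wv h)
  have hG'' := hsecond.congr_of_eventuallyEq (hfirst.mono fun t ht => ht.deriv)
  refine ⟨hfirst.mono fun t ht => ht.differentiableAt, hG''.differentiableAt, ?_⟩
  rw [hG''.deriv]
  calc _ ≤ H * (W * (D * (α * (2 * γ * (1 + 2 * γ * (X + R) ^ 2))) * Y ^ 2 +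
          D * (α * (2 * γ * (X + R))) * Z)) := by
        simpa only [Fintype.card_fin] using abs_sum_mul_le_card_mul hWv fun h =>
          abs_mul_mul_add_mul_le (abs_kafDeriv2_le hγ hd (hαc h) (hgz h))
            (abs_kafDeriv_le hγ hd (hαc h) (hgz h)) (hg' h) (hg'' h)
    _ = _ := by ring

/-- **Second derivative bound for a next-layer pre-activation of a Kafnet.**
If each previous-layer pre-activation `g_h` is differentiable on a neighborhood
of `z` and twice differentiable at `z`, with `|g_h(z)| ≤ X`, `|g_h'(z)| ≤ Y`,
`|g_h''(z)| ≤ Z`, dictionary `|d_k| ≤ R`, mixing coefficients `|α_{hk}| ≤ α`,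
and weights `|W_h| ≤ W`, then
`G(t) = Σ_h W_h (Σ_k α_{hk} exp(−γ(g_h(t)−d_k)²)) + b` is twice differentiable
at `z` with `|G''(z)| ≤ 2HWDαγ[(1 + 2γ(X+R)²)Y² + (X+R)Z]`. -/
theorem kafnet_preactivation_second_deriv_bound (H D : ℕ)
    (g : Fin H → ℝ → ℝ) (z γ X Y Z R α W b : ℝ)
    (d : Fin D → ℝ) (αc : Fin H → Fin D → ℝ) (Wv : Fin H → ℝ)
    (hγ : 0 ≤ γ) (hX : 0 ≤ X) (hY : 0 ≤ Y) (hZ : 0 ≤ Z) (hR : 0 ≤ R)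
    (hα : 0 ≤ α) (hW : 0 ≤ W)
    (hg : ∀ h, ∀ᶠ t in nhds z, DifferentiableAt ℝ (g h) t)
    (hg2 : ∀ h, DifferentiableAt ℝ (deriv (g h)) z)
    (hgz : ∀ h, |g h z| ≤ X) (hg' : ∀ h, |deriv (g h) z| ≤ Y)
    (hg'' : ∀ h, |deriv (deriv (g h)) z| ≤ Z)
    (hd : ∀ k, |d k| ≤ R) (hαc : ∀ h k, |αc h k| ≤ α) (hWv : ∀ h, |Wv h| ≤ W) :
    (∀ᶠ t in nhds z, DifferentiableAt ℝ
        (fun t => (∑ h : Fin H, Wv h *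
          ∑ k : Fin D, αc h k * Real.exp (-γ * (g h t - d k) ^ 2)) + b) t) ∧
      DifferentiableAt ℝ
        (deriv (fun t => (∑ h : Fin H, Wv h *
          ∑ k : Fin D, αc h k * Real.exp (-γ * (g h t - d k) ^ 2)) + b)) z ∧
      |deriv (deriv (fun t => (∑ h : Fin H, Wv h *
          ∑ k : Fin D, αc h k * Real.exp (-γ * (g h t - d k) ^ 2)) + b)) z| ≤
        2 * H * W * D * α * γ * ((1 + 2 * γ * (X + R) ^ 2) * Y ^ 2 + (X + R) * Z) :=
  kafnet_preactivation_second_deriv_bound_general H D g z γ X Y Z R α W b d αc Wv hγ hg hg2 hgz hg'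
    hg'' hd hαc hWv
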